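/- Every staggered quantum walk is strongly an instance of the generalized hyperwalk: given unitaries U_1, ..., U_n on ℂ^{|V|} (the staggered walk evolution), the generalized hyperwalk on the hypergraph with vertex set V and single hyperedge E = {V}, with constant coin C_v = identity and time-varying shift U^E_k = U_k, has the same state space dimension |V| and satisfies, for every initial state |ψ⟩, every number of steps m, and every vertex v: |⟨v| U_{(m mod n)} ⋯ U_1 |ψ⟩|² equals the hyperwalk measurement probability at v after m steps. -/

import Mathlib

open Matrix

/-- Applying the unitaries `U 0, U 1, ..., U (n-1)` cyclically: after `m` steps the
accumulated evolution is `U ((m-1) % n) * ⋯ * U (1 % n) * U (0 % n)`. -/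
noncomputable def cyclicWalk {X : Type*} [Fintype X] [DecidableEq X]
    (U : ℕ → Matrix X X ℂ) (n : ℕ) : ℕ → Matrix X X ℂ
  | 0 => 1
  | m + 1 => U (m % n) * cyclicWalk U n m

theorem cyclicWalk_submatrix_equiv {X Y : Type*} [Fintype X] [DecidableEq X] [Fintype Y]
    [DecidableEq Y] (U : ℕ → Matrix X X ℂ) (n : ℕ) (e : Y ≃ X) (m : ℕ) :
    cyclicWalk (fun k => (U k).submatrix e e) n m = (cyclicWalk U n m).submatrix e e := by
  induction m with
  | zero => exact (submatrix_one_equiv e).symm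
  | succ m ih => simp only [cyclicWalk, ih, submatrix_mul_equiv]

theorem stmt_11_general {N n : ℕ}
    (U : ℕ → Matrix (Fin N) (Fin N) ℂ)
    (coin : Matrix (Fin N × Fin 1) (Fin N × Fin 1) ℂ) (hcoin : coin = 1)
    (shift : ℕ → Matrix (Fin N × Fin 1) (Fin N × Fin 1) ℂ)
    (hshift : ∀ k, shift k =
      Matrix.reindex (Equiv.prodUnique (Fin N) (Fin 1)).symm
        (Equiv.prodUnique (Fin N) (Fin 1)).symm (U k)) :
    Fintype.card (Fin N × Fin 1) = Fintype.card (Fin N) ∧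
    ∀ (ψ : Fin N → ℂ) (m : ℕ) (v : Fin N),
      ‖(cyclicWalk U n m).mulVec ψ v‖ ^ 2 =
        ∑ e : Fin 1,
          ‖(cyclicWalk (fun k => shift k * coin) n m).mulVec
              (fun x => ψ x.1) (v, e)‖ ^ 2 := by
  set f := Equiv.prodUnique (Fin N) (Fin 1)
  have hstep : (fun k => shift k * coin) = fun k => (U k).submatrix f f := by
    funext k
    rw [hshift, hcoin, mul_one, reindex_apply, Equiv.symm_symm]
  refine ⟨by simp, fun ψ m v => ?_⟩
  rw [hstep, cyclicWalk_submatrix_equiv, Fin.sum_univ_one,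
    show (fun x : Fin N × Fin 1 => ψ x.1) = ψ ∘ f from rfl, submatrix_mulVec_equiv]
  rfl

/-- Every staggered quantum walk is strongly an instance of the
generalized hyperwalk: given unitaries `U 0, ..., U (n-1)` on `ℂ^N` applied cyclically
(the staggered walk), the generalized hyperwalk on the hypergraph with the same vertex
set and a single hyperedge containing all vertices, with constant identity coin and
time-varying shift `U^E_k = U k`, has a state space `Fin N × Fin 1` of the same
dimension `N`, and for every initial state `ψ`, number of steps `m` and vertex `v`,
the staggered measurement probability at `v` equals the hyperwalk measurement
probability at `v`. -/
theorem stmt_11 {N n : ℕ} (hn : 0 < n)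
    (U : ℕ → Matrix (Fin N) (Fin N) ℂ)
    (hU : ∀ k, U k ∈ Matrix.unitaryGroup (Fin N) ℂ)
    (coin : Matrix (Fin N × Fin 1) (Fin N × Fin 1) ℂ) (hcoin : coin = 1)
    (shift : ℕ → Matrix (Fin N × Fin 1) (Fin N × Fin 1) ℂ)
    (hshift : ∀ k, shift k =
      Matrix.reindex (Equiv.prodUnique (Fin N) (Fin 1)).symm
        (Equiv.prodUnique (Fin N) (Fin 1)).symm (U k)) :
    Fintype.card (Fin N × Fin 1) = Fintype.card (Fin N) ∧
    ∀ (ψ : Fin N → ℂ) (m : ℕ) (v : Fin N),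
      ‖(cyclicWalk U n m).mulVec ψ v‖ ^ 2 =
        ∑ e : Fin 1,
          ‖(cyclicWalk (fun k => shift k * coin) n m).mulVec
              (fun x => ψ x.1) (v, e)‖ ^ 2 :=
  stmt_11_general U coin hcoin shift hshift
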